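/- In any group G, if b²a = ab², then every power [a,b]ⁿ (n ≥ 1) has commutator length at most 1. -/

import Mathlib

/-!
Let `c = [a, b]`. Since `b²` commutes with `a`, conjugation by `b` inverts `c`, and therefore
`[x c⁻ᵏ, b] = cᵏ [x, b] cᵏ` for every `x`. Taking `x = 1` gives `c²ᵏ` and taking `x = a` gives
`c²ᵏ⁺¹`, so every power of `c` is a single commutator.
-/

/-- The set of elements of `G` expressible as a product of `n` commutators. -/
def IsProdOfNComms {G : Type*} [Group G] (n : ℕ) (g : G) : Prop :=
  ∃ l : List (G × G), l.length = n ∧ (l.map fun p => p.1⁻¹ * p.2⁻¹ * p.1 * p.2).prod = g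

/-- The commutator length of `g`, valued in `ℕ∞` (`⊤` if `g` is not a product
of commutators). -/
noncomputable def cl {G : Type*} [Group G] (g : G) : ℕ∞ :=
  sInf {n : ℕ∞ | ∃ k : ℕ, n = (k : ℕ∞) ∧ IsProdOfNComms k g}

section

variable {G : Type*} [Group G]

theorem conj_commutator_eq_inv_of_sq_mul_comm {a b : G} (h : b ^ 2 * a = a * b ^ 2) :
    b⁻¹ * (a⁻¹ * b⁻¹ * a * b) * b = (a⁻¹ * b⁻¹ * a * b)⁻¹ := by
  calc b⁻¹ * (a⁻¹ * b⁻¹ * a * b) * b = b⁻¹ * a⁻¹ * b⁻¹ * (a * b ^ 2) := by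
        simp only [pow_two]; group
    _ = b⁻¹ * a⁻¹ * b⁻¹ * (b ^ 2 * a) := by rw [h]
    _ = (a⁻¹ * b⁻¹ * a * b)⁻¹ := by group

theorem conj_inv_pow_eq_pow_of_conj_eq_inv {b c : G} (hc : b⁻¹ * c * b = c⁻¹) (k : ℕ) :
    b⁻¹ * (c ^ k)⁻¹ * b = c ^ k := by
  have hpow : b⁻¹ * c ^ k * b = (c ^ k)⁻¹ := by
    simpa only [inv_inv, hc, inv_pow] using (conj_pow (a := b⁻¹) (b := c) (i := k)).symm
  calc b⁻¹ * (c ^ k)⁻¹ * b = (b⁻¹ * c ^ k * b)⁻¹ := by group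
    _ = c ^ k := by rw [hpow, inv_inv]

theorem commutator_mul_inv_pow_of_conj_eq_inv {b c : G} (hc : b⁻¹ * c * b = c⁻¹) (x : G)
    (k : ℕ) :
    (x * (c ^ k)⁻¹)⁻¹ * b⁻¹ * (x * (c ^ k)⁻¹) * b = c ^ k * (x⁻¹ * b⁻¹ * x * b) * c ^ k := by
  calc (x * (c ^ k)⁻¹)⁻¹ * b⁻¹ * (x * (c ^ k)⁻¹) * b
        = c ^ k * (x⁻¹ * b⁻¹ * x * b) * (b⁻¹ * (c ^ k)⁻¹ * b) := by group
    _ = c ^ k * (x⁻¹ * b⁻¹ * x * b) * c ^ k := by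
      rw [conj_inv_pow_eq_pow_of_conj_eq_inv hc]

theorem exists_commutator_eq_commutator_pow_of_sq_mul_comm {a b : G}
    (h : b ^ 2 * a = a * b ^ 2) (n : ℕ) :
    ∃ x y : G, x⁻¹ * y⁻¹ * x * y = (a⁻¹ * b⁻¹ * a * b) ^ n := by
  set c := a⁻¹ * b⁻¹ * a * b with hc_def
  have hc : b⁻¹ * c * b = c⁻¹ := conj_commutator_eq_inv_of_sq_mul_comm h
  obtain ⟨k, rfl | rfl⟩ := Nat.even_or_odd' n
  · refine ⟨1 * (c ^ k)⁻¹, b, ?_⟩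
    rw [commutator_mul_inv_pow_of_conj_eq_inv hc]
    group
  · refine ⟨a * (c ^ k)⁻¹, b, ?_⟩
    rw [commutator_mul_inv_pow_of_conj_eq_inv hc, ← hc_def]
    group

theorem cl_le_one_of_eq_commutator {g x y : G} (hg : x⁻¹ * y⁻¹ * x * y = g) : cl g ≤ 1 :=
  sInf_le ⟨1, rfl, [(x, y)], rfl, by simpa using hg⟩

end

theorem cl_comm_pow_le_one_general {G : Type*} [Group G] (a b : G)
    (h : b ^ 2 * a = a * b ^ 2) (n : ℕ) :
    cl ((a⁻¹ * b⁻¹ * a * b) ^ n) ≤ 1 := by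
  obtain ⟨x, y, hxy⟩ := exists_commutator_eq_commutator_pow_of_sq_mul_comm h n
  exact cl_le_one_of_eq_commutator hxy

/-- If `b²a = ab²`, then every power `[a,b]ⁿ` (`n ≥ 1`) has commutator length at
most `1`, where `[x,y] = x⁻¹y⁻¹xy`. -/
theorem cl_comm_pow_le_one {G : Type*} [Group G] (a b : G)
    (h : b ^ 2 * a = a * b ^ 2) (n : ℕ) (hn : 1 ≤ n) :
    cl ((a⁻¹ * b⁻¹ * a * b) ^ n) ≤ 1 :=
  cl_comm_pow_le_one_general a b h n
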